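/- For the graph G_B obtained by connecting each canonical pair {v, π_B(v)} of a GM bubble B by an edge of color 0, the total number of bicolored {0,c}-cycles is Σ_{c=1}^d L_{0c}(G_B) = d + Σ_C (d − |C|) b_C = dV/2 − Σ_C |C| b_C. -/

import Mathlib

open Equiv

/-- A bubble with `2n` vertices (`n` white, `n` black): for each color `c ∈ {1,…,d}` the
perfect matching of color `c` is a bijection from white to black vertices. -/
abbrev Bubble (d n : ℕ) := Fin d → Equiv.Perm (Fin n)

/-- Extension of a white-to-black matching to one more white and one more black vertex
(both indexed by `0`, old vertices shifted by `Fin.succ`), the two new vertices matched. -/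
def extPerm {n : ℕ} (f : Equiv.Perm (Fin n)) : Equiv.Perm (Fin (n + 1)) :=
  (finSuccEquiv n).symm.permCongr f.optionCongr

/-- `C`-bidipole insertion at the white vertex `v`: `v` is replaced by the three vertices
`v`, `v̄`, `w`, where the new black vertex `v̄` is joined to the new white vertex `w` by the
colors of `C` and to `v` by the complementary colors. -/
def insertWhite {d n : ℕ} (B : Bubble d n) (C : Finset (Fin d)) (v : Fin n) :
    Bubble d (n + 1) :=
  fun c => if c ∈ C then extPerm (B c) else extPerm (B c) * Equiv.swap 0 v.succ

/-- `C`-bidipole insertion at a black vertex (the color-reversed move). -/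
def insertBlack {d n : ℕ} (B : Bubble d n) (C : Finset (Fin d)) (b : Fin n) :
    Bubble d (n + 1) :=
  fun c => if c ∈ C then extPerm (B c) else Equiv.swap 0 b.succ * extPerm (B c)

/-- Admissible color sets: nonempty, `|C| ≤ d/2`, and containing the color `1`
(i.e. `(0 : Fin d)`) whenever `|C| = d/2`. -/
def AdmSet (d : ℕ) (C : Finset (Fin d)) : Prop :=
  C.Nonempty ∧ 2 * C.card ≤ d ∧ (2 * C.card = d → ∃ h : 0 < d, (⟨0, h⟩ : Fin d) ∈ C)

/-- `Builds d n B s` : the bubble `B` (with `2n` vertices) is obtained from the 2-vertex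
bubble by a sequence of bidipole insertions whose multiset of (admissible) color sets
is `s`.  GM bubbles are exactly the bubbles built this way. -/
inductive Builds (d : ℕ) : (n : ℕ) → Bubble d n → Multiset (Finset (Fin d)) → Prop
  | base : Builds d 1 (fun _ => 1) 0
  | stepW {n : ℕ} {B : Bubble d n} {s : Multiset (Finset (Fin d))}
      (C : Finset (Fin d)) (v : Fin n) (hC : AdmSet d C) (h : Builds d n B s) :
      Builds d (n + 1) (insertWhite B C v) (C ::ₘ s)
  | stepB {n : ℕ} {B : Bubble d n} {s : Multiset (Finset (Fin d))}
      (C : Finset (Fin d)) (b : Fin n) (hC : AdmSet d C) (h : Builds d n B s) :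
      Builds d (n + 1) (insertBlack B C b) (C ::ₘ s)

/-- Number of orbits of a self-map: classes of the equivalence generated by `x ~ f x`. -/
noncomputable def numOrbits {D : Type*} (f : D → D) : ℕ :=
  Nat.card (Quotient (Relation.EqvGen.setoid fun x y => f x = y))

/-- Total number of bicolored `{0,c}`-cycles of the graph obtained by joining each white
vertex `v` to the black vertex `π v` by an edge of color `0`: for each color `c`, the
cycles are the orbits of `v ↦ (B c)⁻¹ (π v)` on white vertices. -/
noncomputable def pairingCycles {d n : ℕ} (B : Bubble d n) (π : Equiv.Perm (Fin n)) : ℕ :=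
  ∑ c : Fin d, numOrbits fun v => (B c).symm (π v)

open Finset

/-!
The `{0,c}`-cycles of `G_B` are the cycles of the permutation `(B c)⁻¹ * π` of the white
vertices. After a `C`-bidipole insertion at `v` the canonical pairing is forced: the new black
vertex `v̄` shares with any white vertex other than `v` at most the colors of `C`, which are not a
majority, so it is paired with `v`, and the other pairs form the canonical pairing of the smaller
bubble. For `c ∈ C` the new white vertex then lies on an old `{0,c}`-cycle, while for `c ∉ C` it
closes a new one, so the total count grows by `d - |C|`. Insertion at a black vertex is insertion
at a white vertex of the transposed bubble.
-/

section Orbits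

variable {α β : Type*}

abbrev Orbits (f : α → α) : Type _ := Quot fun x y : α => f x = y

def orbitOf (f : α → α) (x : α) : Orbits f := Quot.mk _ x

lemma orbitOf_apply (f : α → α) (x : α) : orbitOf f (f x) = orbitOf f x :=
  (Quot.sound (r := fun x y : α => f x = y) rfl).symm

lemma numOrbits_eq_card_orbits (f : α → α) : numOrbits f = Nat.card (Orbits f) :=
  Nat.card_congr
    { toFun := Quot.lift (orbitOf f) fun _ _ h => Quot.eqvGen_sound h
      invFun := Quot.lift (Quotient.mk _) fun _ _ h => Quotient.sound (.rel _ _ h)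
      left_inv := by rintro ⟨x⟩; rfl
      right_inv := by rintro ⟨x⟩; rfl }

lemma numOrbits_eq_of_maps {f : α → α} {g : β → β} (φ : α → β) (ψ : β → α)
    (hφ : ∀ x, orbitOf g (φ (f x)) = orbitOf g (φ x))
    (hψ : ∀ y, orbitOf f (ψ (g y)) = orbitOf f (ψ y))
    (hφψ : ∀ y, orbitOf g (φ (ψ y)) = orbitOf g y)
    (hψφ : ∀ x, orbitOf f (ψ (φ x)) = orbitOf f x) :
    numOrbits f = numOrbits g := by
  rw [numOrbits_eq_card_orbits, numOrbits_eq_card_orbits]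
  exact Nat.card_congr
    { toFun := Quot.lift (fun x => orbitOf g (φ x)) fun x _ h => h ▸ (hφ x).symm
      invFun := Quot.lift (fun y => orbitOf f (ψ y)) fun y _ h => h ▸ (hψ y).symm
      left_inv := by rintro ⟨x⟩; exact hψφ x
      right_inv := by rintro ⟨y⟩; exact hφψ y }

lemma numOrbits_permCongr (e : α ≃ β) (σ : Perm α) : numOrbits (e.permCongr σ) = numOrbits σ :=
  numOrbits_eq_of_maps e.symm e (fun x => by simp [orbitOf_apply])
    (fun y => by simpa using orbitOf_apply (e.permCongr σ) (e y))
    (fun y => by simp) (fun x => by simp)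

lemma numOrbits_mul_comm (σ τ : Perm α) : numOrbits ⇑(σ * τ) = numOrbits ⇑(τ * σ) :=
  numOrbits_eq_of_maps τ σ (fun x => orbitOf_apply _ (τ x) ▸ rfl)
    (fun y => orbitOf_apply _ (σ y) ▸ rfl) (orbitOf_apply _) (orbitOf_apply _)

lemma numOrbits_inv (σ : Perm α) : numOrbits ⇑(σ⁻¹ : Perm α) = numOrbits ⇑σ :=
  numOrbits_eq_of_maps id id (fun x => by simpa using (orbitOf_apply σ (σ⁻¹ x)).symm)
    (fun y => by simpa using (orbitOf_apply (σ⁻¹ : Perm α) (σ y)).symm)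
    (fun _ => rfl) (fun _ => rfl)

lemma numOrbits_of_unique [Unique α] (f : α → α) : numOrbits f = 1 := by
  have : Nonempty (Orbits f) := ⟨orbitOf f default⟩
  rw [numOrbits_eq_card_orbits, Nat.card_unique]

lemma numOrbits_optionMap [Finite α] (f : α → α) :
    numOrbits (Option.map f) = numOrbits f + 1 := by
  rw [numOrbits_eq_card_orbits, numOrbits_eq_card_orbits, ← Finite.card_option]
  refine Nat.card_congr
    { toFun := Quot.lift (Option.map (orbitOf f)) ?_
      invFun := fun o => o.elim (orbitOf _ none) (Quot.lift (fun x => orbitOf _ (some x)) ?_)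
      left_inv := ?_
      right_inv := ?_ }
  · rintro (_ | x) _ rfl
    · rfl
    · exact congrArg some (orbitOf_apply f x).symm
  · rintro x _ rfl
    exact (orbitOf_apply (Option.map f) (some x)).symm
  · rintro ⟨_ | x⟩ <;> rfl
  · rintro (_ | q)
    · rfl
    · induction q using Quot.ind; rfl

lemma numOrbits_optionMap_comp_swap [DecidableEq α] (f : α → α) (a : α) :
    numOrbits (Option.map f ∘ swap none (some a)) = numOrbits f := by
  set F := Option.map f ∘ swap none (some a)
  have hF_none : F none = some (f a) := by simp [F]
  have hF_a : F (some a) = none := by simp [F]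
  have hF_some {x : α} (hx : x ≠ a) : F (some x) = some (f x) := by
    simp [F, swap_apply_of_ne_of_ne, hx]
  -- `none` sits in the `F`-cycle of `a`, between `a` and `f a`
  have hnone : orbitOf F none = orbitOf F (some a) := hF_a ▸ orbitOf_apply F (some a)
  refine (numOrbits_eq_of_maps some (fun o => o.getD a) (fun x => ?_) (fun y => ?_)
    (fun y => ?_) (fun _ => rfl)).symm
  · rcases eq_or_ne x a with rfl | hx
    · rw [← hF_none, orbitOf_apply, hnone]
    · rw [← hF_some hx, orbitOf_apply]
  · rcases y with _ | x
    · simp only [hF_none, Option.getD_some, Option.getD_none, orbitOf_apply]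
    · rcases eq_or_ne x a with rfl | hx
      · simp [hF_a]
      · simp only [hF_some hx, Option.getD_some, orbitOf_apply]
  · rcases y with _ | x
    · exact hnone.symm
    · rfl

end Orbits

section ExtPerm

variable {n : ℕ}

@[simp] lemma extPerm_zero (f : Perm (Fin n)) : extPerm f 0 = 0 := by
  simp [extPerm]

@[simp] lemma extPerm_succ (f : Perm (Fin n)) (x : Fin n) : extPerm f x.succ = (f x).succ := by
  simp [extPerm]

@[simp] lemma extPerm_eq_zero_iff (f : Perm (Fin n)) {x : Fin (n + 1)} :
    extPerm f x = 0 ↔ x = 0 := by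
  rw [← extPerm_zero f, (extPerm f).apply_eq_iff_eq, extPerm_zero]

lemma extPerm_mul (f g : Perm (Fin n)) : extPerm (f * g) = extPerm f * extPerm g := by
  ext x; cases x using Fin.cases <;> simp

lemma extPerm_inv (f : Perm (Fin n)) : extPerm f⁻¹ = (extPerm f)⁻¹ := by
  rw [eq_inv_iff_mul_eq_one, ← extPerm_mul, inv_mul_cancel]
  ext x; cases x using Fin.cases <;> simp

lemma exists_eq_swap_mul_extPerm (σ : Perm (Fin (n + 1))) :
    ∃ π, σ = swap 0 (σ 0) * extPerm π := by
  obtain ⟨⟨p, π⟩, rfl⟩ := Perm.decomposeFin.symm.surjective σ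
  refine ⟨π, ?_⟩
  ext x; cases x using Fin.cases <;> simp

lemma exists_eq_extPerm_mul_swap (σ : Perm (Fin (n + 1))) :
    ∃ π, σ = extPerm π * swap 0 (σ⁻¹ 0) := by
  obtain ⟨π, hπ⟩ := exists_eq_swap_mul_extPerm σ⁻¹
  refine ⟨π⁻¹, ?_⟩
  generalize σ⁻¹ 0 = w at hπ ⊢
  rw [← inv_inv σ, hπ, mul_inv_rev, swap_inv, extPerm_inv]

lemma numOrbits_extPerm (g : Perm (Fin n)) : numOrbits ⇑(extPerm g) = numOrbits ⇑g + 1 :=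
  (numOrbits_permCongr _ _).trans (numOrbits_optionMap g)

lemma numOrbits_extPerm_mul_swap (g : Perm (Fin n)) (v : Fin n) :
    numOrbits ⇑(extPerm g * swap 0 v.succ) = numOrbits ⇑g := by
  have : extPerm g * swap 0 v.succ =
      (finSuccEquiv n).symm.permCongr (g.optionCongr * swap none (some v)) := by
    ext x
    cases x using Fin.cases with
    | zero => simp
    | succ x => by_cases hx : x = v <;> simp [swap_apply_def, hx]
  rw [this, numOrbits_permCongr]
  exact numOrbits_optionMap_comp_swap g v

end ExtPerm

def IsMajority {d : ℕ} (S : Finset (Fin d)) : Prop :=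
  d < 2 * #S ∨ (2 * #S = d ∧ ∀ hd : 0 < d, (⟨0, hd⟩ : Fin d) ∉ S)

lemma IsMajority.mono {d : ℕ} {S T : Finset (Fin d)} (hS : IsMajority S) (hST : S ⊆ T) :
    IsMajority T := by
  have hcard := card_le_card hST
  rcases hS with hS | ⟨hS, h0⟩
  · exact Or.inl (by omega)
  · rcases hcard.lt_or_eq with hlt | heq
    · exact Or.inl (by omega)
    · rw [← eq_of_subset_of_card_le hST heq.ge]
      exact Or.inr ⟨hS, h0⟩

lemma AdmSet.not_isMajority {d : ℕ} {C : Finset (Fin d)} (hC : AdmSet d C) : ¬IsMajority C := by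
  rintro (h | ⟨h, h0⟩)
  · exact absurd hC.2.1 (by omega)
  · obtain ⟨hd, hmem⟩ := hC.2.2 h
    exact h0 hd hmem

lemma pairingCycles_eq_sum {d n : ℕ} (B : Bubble d n) (π : Perm (Fin n)) :
    pairingCycles B π = ∑ c, numOrbits ⇑((B c)⁻¹ * π) :=
  rfl

namespace Bubble

variable {d n : ℕ}

def transpose (B : Bubble d n) : Bubble d n := fun c => (B c)⁻¹

def pairColors (B : Bubble d n) (π : Perm (Fin n)) (v : Fin n) : Finset (Fin d) :=
  univ.filter fun c => B c v = π v

/-- `π` is the canonical pairing `π_B`. -/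
def IsCanonical (B : Bubble d n) (π : Perm (Fin n)) : Prop :=
  ∀ v, IsMajority (B.pairColors π v)

lemma pairColors_transpose (B : Bubble d n) (π : Perm (Fin n)) (v : Fin n) :
    B.transpose.pairColors π v = B.pairColors π⁻¹ (π v) := by
  ext c
  simp [pairColors, transpose, eq_symm_apply, eq_comm]

lemma isCanonical_transpose {B : Bubble d n} {π : Perm (Fin n)} :
    B.transpose.IsCanonical π ↔ B.IsCanonical π⁻¹ := by
  simp only [IsCanonical, pairColors_transpose]
  exact π.forall_congr_right (q := fun v => IsMajority (B.pairColors π⁻¹ v))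

lemma pairingCycles_transpose (B : Bubble d n) (π : Perm (Fin n)) :
    pairingCycles B.transpose π = pairingCycles B π⁻¹ := by
  refine sum_congr rfl fun c _ => ?_
  change numOrbits ⇑((B c)⁻¹⁻¹ * π) = numOrbits ⇑((B c)⁻¹ * π⁻¹)
  rw [← numOrbits_inv, mul_inv_rev, inv_inv, numOrbits_mul_comm]

lemma insertBlack_eq_transpose (B : Bubble d n) (C : Finset (Fin d)) (b : Fin n) :
    insertBlack B C b = (insertWhite B.transpose C b).transpose := by
  funext c
  simp only [insertBlack, insertWhite, transpose]
  split_ifs <;> simp [mul_inv_rev, extPerm_inv]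

lemma insertWhite_of_mem {B : Bubble d n} {C : Finset (Fin d)} {v : Fin n} {c : Fin d}
    (hc : c ∈ C) : insertWhite B C v c = extPerm (B c) :=
  if_pos hc

lemma insertWhite_of_notMem {B : Bubble d n} {C : Finset (Fin d)} {v : Fin n} {c : Fin d}
    (hc : c ∉ C) : insertWhite B C v c = extPerm (B c) * swap 0 v.succ :=
  if_neg hc

lemma exists_isCanonical_of_insertWhite {B : Bubble d n} {C : Finset (Fin d)} {v : Fin n}
    {π : Perm (Fin (n + 1))} (hC : ¬IsMajority C) (hπ : (insertWhite B C v).IsCanonical π) :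
    ∃ π₀, B.IsCanonical π₀ ∧ π = extPerm π₀ * swap 0 v.succ := by
  obtain ⟨π₀, hπ₀⟩ := exists_eq_extPerm_mul_swap π
  -- a white vertex other than `v` shares with the new black vertex `0` only colors of `C`
  have hw : π⁻¹ 0 = v.succ := by
    by_contra hw
    refine hC ((hπ (π⁻¹ 0)).mono fun c hc => ?_)
    by_contra hcC
    exact hw (by simpa [pairColors, insertWhite_of_notMem hcC, swap_apply_eq_iff] using hc)
  rw [hw] at hπ₀
  -- `x ≠ v` survives as `x.succ`, while the partner of `v` passes to the new white vertex `0`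
  refine ⟨π₀, fun x => (hπ (swap 0 v.succ x.succ)).mono fun c hc => ?_, hπ₀⟩
  by_cases hcC : c ∈ C
  · rcases eq_or_ne x v with rfl | hx
    · simp [pairColors, insertWhite_of_mem hcC, hπ₀, eq_comm (a := (0 : Fin (n + 1)))] at hc
    · simpa [pairColors, insertWhite_of_mem hcC, hπ₀, swap_apply_of_ne_of_ne, hx] using hc
  · simpa [pairColors, insertWhite_of_notMem hcC, hπ₀] using hc

lemma numOrbits_insertWhite (B : Bubble d n) (C : Finset (Fin d)) (v : Fin n)
    (π₀ : Perm (Fin n)) (c : Fin d) :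
    numOrbits ⇑((insertWhite B C v c)⁻¹ * (extPerm π₀ * swap 0 v.succ)) =
      numOrbits ⇑((B c)⁻¹ * π₀) + if c ∈ C then 0 else 1 := by
  by_cases hc : c ∈ C
  · rw [insertWhite_of_mem hc, if_pos hc, add_zero, ← extPerm_inv, ← mul_assoc, ← extPerm_mul,
      numOrbits_extPerm_mul_swap]
  · rw [insertWhite_of_notMem hc, if_neg hc, mul_inv_rev, swap_inv, ← extPerm_inv, mul_assoc,
      ← mul_assoc (extPerm _), ← extPerm_mul, numOrbits_mul_comm, mul_assoc, swap_mul_self,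
      mul_one, numOrbits_extPerm]

lemma pairingCycles_insertWhite (B : Bubble d n) (C : Finset (Fin d)) (v : Fin n)
    (π₀ : Perm (Fin n)) :
    pairingCycles (insertWhite B C v) (extPerm π₀ * swap 0 v.succ) =
      pairingCycles B π₀ + (d - #C) := by
  simp only [pairingCycles_eq_sum, numOrbits_insertWhite, sum_add_distrib]
  simp [sum_ite, filter_notMem_eq_sdiff, ← compl_eq_univ_sdiff, card_compl]

end Bubble

lemma sum_map_sub_card_add_sum_map_card {d : ℕ} (s : Multiset (Finset (Fin d))) :
    (s.map fun C => d - #C).sum + (s.map fun C => #C).sum = d * Multiset.card s := by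
  rw [← Multiset.sum_map_add, Multiset.map_congr rfl fun C _ =>
    tsub_add_cancel_of_le ((card_le_univ C).trans_eq (Fintype.card_fin d))]
  simp [mul_comm]

namespace Builds

variable {d n : ℕ} {B : Bubble d n} {s : Multiset (Finset (Fin d))}

lemma card_add_one (h : Builds d n B s) : Multiset.card s + 1 = n := by
  induction h <;> simp [*]

lemma pairingCycles_eq_of_isCanonical (h : Builds d n B s) {π : Perm (Fin n)}
    (hπ : B.IsCanonical π) : pairingCycles B π = d + (s.map fun C => d - #C).sum := by
  induction h with
  | base => simp [pairingCycles_eq_sum, numOrbits_of_unique]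
  | stepW C v hC _ ih =>
    obtain ⟨π₀, hπ₀, rfl⟩ := Bubble.exists_isCanonical_of_insertWhite hC.not_isMajority hπ
    rw [Bubble.pairingCycles_insertWhite, ih hπ₀, Multiset.map_cons, Multiset.sum_cons]
    ring
  | stepB C b hC _ ih =>
    rw [Bubble.insertBlack_eq_transpose, Bubble.isCanonical_transpose] at hπ
    obtain ⟨π₀, hπ₀, hπ_eq⟩ := Bubble.exists_isCanonical_of_insertWhite hC.not_isMajority hπ
    rw [Bubble.insertBlack_eq_transpose, Bubble.pairingCycles_transpose, hπ_eq,
      Bubble.pairingCycles_insertWhite, Bubble.pairingCycles_transpose,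
      ih (Bubble.isCanonical_transpose.1 hπ₀), Multiset.map_cons, Multiset.sum_cons]
    ring

end Builds

theorem canonical_pairing_cycles_general {d n : ℕ} {B : Bubble d n}
    {s : Multiset (Finset (Fin d))} (h : Builds d n B s) (π : Equiv.Perm (Fin n))
    (hπ : ∀ v : Fin n,
      d < 2 * (Finset.univ.filter fun c => B c v = π v).card ∨
      (2 * (Finset.univ.filter fun c => B c v = π v).card = d ∧
        ∀ (hd0 : 0 < d), (⟨0, hd0⟩ : Fin d) ∉ Finset.univ.filter fun c => B c v = π v)) :
    pairingCycles B π = d + (s.map fun C => d - C.card).sum ∧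
      pairingCycles B π = d * n - (s.map fun C => C.card).sum := by
  have hcycles := h.pairingCycles_eq_of_isCanonical hπ
  refine ⟨hcycles, ?_⟩
  have hsum := sum_map_sub_card_add_sum_map_card s
  rw [hcycles, ← h.card_add_one, mul_add_one]
  omega

/-- for the graph `G_B` obtained by joining every canonical pair of a GM
bubble `B` by a color-0 edge, the total number of bicolored `{0,c}`-cycles is
`d + Σ_C (d - |C|) b_C = dV/2 - Σ_C |C| b_C` (here `V = 2n`). -/
theorem canonical_pairing_cycles {d n : ℕ} (hd : 2 < d) {B : Bubble d n}
    {s : Multiset (Finset (Fin d))} (h : Builds d n B s) (π : Equiv.Perm (Fin n))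
    (hπ : ∀ v : Fin n,
      d < 2 * (Finset.univ.filter fun c => B c v = π v).card ∨
      (2 * (Finset.univ.filter fun c => B c v = π v).card = d ∧
        ∀ (hd0 : 0 < d), (⟨0, hd0⟩ : Fin d) ∉ Finset.univ.filter fun c => B c v = π v)) :
    pairingCycles B π = d + (s.map fun C => d - C.card).sum ∧
      pairingCycles B π = d * n - (s.map fun C => C.card).sum :=
  canonical_pairing_cycles_general h π hπ
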